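/- Let 0 < p < ∞, let F be analytic on Ω₊, and let 0 < τ₁ < τ₂ and M₁ > 0 satisfy sup_{τ∈[τ₁,τ₂]} ∫_Γ |F(ζ + iτ)|^p |dζ| ≤ M₁. Then for any fixed δ with 0 < δ < (τ₂ − τ₁)/2, F(ζ(u) + iτ) → 0 uniformly for τ ∈ [τ₁ + δ, τ₂ − δ] as |u| → ∞; that is, for every ε > 0 there is R > 0 such that |F(ζ(u) + iτ)| < ε whenever |u| ≥ R and τ₁ + δ ≤ τ ≤ τ₂ − δ. -/

import Mathlib

open Complex MeasureTheory Filter Set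
open scoped ENNReal Real Topology BigOperators

noncomputable section

/-- The boundary curve `ζ(u) = u + i·a(u)`. -/
def zetaC (a : ℝ → ℝ) (u : ℝ) : ℂ := (u : ℂ) + (a u : ℂ) * Complex.I

/-- The Lipschitz domain above the curve: `Ω₊ = {u + iv : v > a(u)}`. -/
def OmegaP (a : ℝ → ℝ) : Set ℂ := {w : ℂ | a w.re < w.im}

/-- The domain below the curve: `Ω₋ = {u + iv : v < a(u)}`. -/
def OmegaM (a : ℝ → ℝ) : Set ℂ := {w : ℂ | w.im < a w.re}

/-- Arc-length density `√(1 + a′(u)²)`. -/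
def arcDen (a : ℝ → ℝ) (u : ℝ) : ℝ := Real.sqrt (1 + (deriv a u) ^ 2)

/-- `∫_Γ |F(ζ + iτ)|^p |dζ|`, as an extended nonnegative real. -/
def bdryInt (a : ℝ → ℝ) (p : ℝ) (F : ℂ → ℂ) (τ : ℝ) : ℝ≥0∞ :=
  ∫⁻ u : ℝ, ENNReal.ofReal (‖F (zetaC a u + (τ : ℂ) * Complex.I)‖ ^ p * arcDen a u)

/-- `‖F‖_{H^p(Ω₊)}^p = sup_{τ>0} ∫_Γ |F(ζ + iτ)|^p |dζ|`. -/
def HpPow (a : ℝ → ℝ) (p : ℝ) (F : ℂ → ℂ) : ℝ≥0∞ :=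
  ⨆ (τ : ℝ) (_ : 0 < τ), bdryInt a p F τ

/-- `‖F‖_{H^p(Ω₊)}`. -/
def HpNorm (a : ℝ → ℝ) (p : ℝ) (F : ℂ → ℂ) : ℝ≥0∞ := HpPow a p F ^ (1 / p)

/-- Membership in the Hardy space `H^p(Ω₊)`. -/
def MemHp (a : ℝ → ℝ) (p : ℝ) (F : ℂ → ℂ) : Prop :=
  DifferentiableOn ℂ F (OmegaP a) ∧ HpPow a p F < ⊤

/-- The upper half-plane `ℂ₊`. -/
def UHP : Set ℂ := {z : ℂ | 0 < z.im}

/-- `∫_ℝ |f(x + iy)|^p dx`. -/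
def planeInt (p : ℝ) (f : ℂ → ℂ) (y : ℝ) : ℝ≥0∞ :=
  ∫⁻ x : ℝ, ENNReal.ofReal (‖f ((x : ℂ) + (y : ℂ) * Complex.I)‖ ^ p)

/-- `‖f‖_{H^p(ℂ₊)}^p`. -/
def HpPowU (p : ℝ) (f : ℂ → ℂ) : ℝ≥0∞ := ⨆ (y : ℝ) (_ : 0 < y), planeInt p f y

/-- `‖f‖_{H^p(ℂ₊)}`. -/
def HpNormU (p : ℝ) (f : ℂ → ℂ) : ℝ≥0∞ := HpPowU p f ^ (1 / p)

/-- Membership in the classical Hardy space `H^p(ℂ₊)`. -/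
def MemHpU (p : ℝ) (f : ℂ → ℂ) : Prop :=
  DifferentiableOn ℂ f UHP ∧ HpPowU p f < ⊤

/-- The transform `TF(z) = F(Φ(z))·(Φ′(z))^{1/p}`, where `(Φ′)^{1/p} := exp(L/p)`
for a holomorphic branch `L` of `log Φ′`. -/
def Tmap (p : ℝ) (Φ L F : ℂ → ℂ) : ℂ → ℂ :=
  fun z => F (Φ z) * Complex.exp (L z / (p : ℂ))

/-- The angle `φ₀` with `ζ′(u₀) = |ζ′(u₀)|·e^{iφ₀}`, `ζ′(u₀) = 1 + i·a′(u₀)`. -/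
def phi0 (a : ℝ → ℝ) (u₀ : ℝ) : ℝ := Complex.arg (1 + Complex.I * Complex.ofReal (deriv a u₀))

/-- The nontangential approach region `Ω_φ(ζ₀)`. -/
def OmegaSector (a : ℝ → ℝ) (u₀ : ℝ) (φ : ℝ) : Set ℂ :=
  {w : ℂ | ∃ r θ : ℝ, 0 < r ∧ φ < θ - phi0 a u₀ ∧ θ - phi0 a u₀ < Real.pi - φ ∧
    w = zetaC a u₀ + (r : ℂ) * Complex.exp ((θ : ℂ) * Complex.I)}

/-- `F` has nontangential boundary limit `l` at `ζ(u₀)`. -/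
def HasNTLimit (a : ℝ → ℝ) (F : ℂ → ℂ) (u₀ : ℝ) (l : ℂ) : Prop :=
  ∀ φ ∈ Set.Ioo (0 : ℝ) (Real.pi / 2),
    Filter.Tendsto F (nhdsWithin (zetaC a u₀) (OmegaSector a u₀ φ ∩ OmegaP a)) (nhds l)

/-- The kernel `K_z(ζ, ζ₀) = (1/(πi)) · z/((ζ − ζ₀)² − z²)`. -/
def Kker (z ζ ζ₀ : ℂ) : ℂ :=
  (1 / ((Real.pi : ℂ) * Complex.I)) * (z / ((ζ - ζ₀) ^ 2 - z ^ 2))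

end

/-!
The shear `(u, t) ↦ ζ(u) + i t` preserves Lebesgue measure, so the hypothesis, together with
`√(1 + a′²) ≥ 1`, bounds the area integral of `|F|^p` over the strip
`{τ₁ ≤ Im w − a(Re w) ≤ τ₂}` by `M₁ (τ₂ − τ₁)`. Since `a` is `M`-Lipschitz, the disc of radius
`ρ = δ / (1 + M)` about `ζ(u) + iτ` lies in that strip, and the sub-mean value inequality
`|F(z)|^p ≤ C ρ⁻² ∫_{B(z, ρ)} |F|^p` bounds `|F(ζ(u) + iτ)|^p` by the integral of `|F|^p` over the
part of the strip where `|Re w| ≥ |u| − ρ`; these tails of a finite integral tend to `0`.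

The sub-mean value inequality is the circle mean value property integrated over the radius when
`p = 1`. For `p ≤ 1` it follows by maximising `|F(w)|^p (R − |w − c|)²` over the disc
(Hardy–Littlewood), and for larger `p` by applying the case `p / k ≤ 1` to `F^k`.
-/

open Metric Real
open scoped NNReal

theorem DiffContOnCl.norm_le_circleAverage_norm {f : ℂ → ℂ} {c : ℂ} {R : ℝ}
    (hf : DiffContOnCl ℂ f (ball c |R|)) :
    ‖f c‖ ≤ Real.circleAverage (fun z => ‖f z‖) c R := by
  rw [← hf.circleAverage, circleAverage_def, circleAverage_def, norm_smul, smul_eq_mul,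
    norm_inv, Real.norm_of_nonneg (by positivity)]
  gcongr
  exact intervalIntegral.norm_integral_le_integral_norm (by positivity)

theorem setIntegral_Ioo_circleMap_eq_circleAverage (g : ℂ → ℝ) (c : ℂ) (r : ℝ) :
    ∫ θ in Ioo (-π) π, g (circleMap c r θ) = 2 * π * circleAverage g c r := by
  have hper : Function.Periodic (fun θ => g (circleMap c r θ)) (2 * π) := fun θ => by
    simp only [periodic_circleMap c r θ]
  have hshift := hper.intervalIntegral_add_eq (-π) 0
  rw [zero_add, show -π + 2 * π = π by ring] at hshift
  rw [circleAverage_def, smul_eq_mul, ← mul_assoc, mul_inv_cancel₀ (by positivity), one_mul,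
    ← integral_Ioc_eq_integral_Ioo, ← intervalIntegral.integral_of_le (by linarith [pi_pos]),
    hshift]

theorem setIntegral_ball_eq_setIntegral_polar (g : ℂ → ℝ) (c : ℂ) (R : ℝ) :
    ∫ w in ball c R, g w = ∫ q in Ioo 0 R ×ˢ Ioo (-π) π, q.1 * g (circleMap c q.1 q.2) := by
  have hpolar (q : ℝ × ℝ) : c + Complex.polarCoord.symm q = circleMap c q.1 q.2 := by
    simp [Complex.polarCoord_symm_apply, circleMap, Complex.exp_mul_I]
  rw [← integral_indicator measurableSet_ball,
    ← integral_add_left_eq_self _ c, ← Complex.integral_comp_polarCoord_symm,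
    polarCoord_target, ← integral_indicator (measurableSet_Ioi.prod measurableSet_Ioo),
    ← integral_indicator (measurableSet_Ioo.prod measurableSet_Ioo)]
  congr 1
  ext ⟨r, θ⟩
  simp only [indicator, mem_prod, mem_Ioi, mem_Ioo, mem_ball, hpolar, smul_eq_mul,
    dist_eq_norm, circleMap_sub_center, norm_circleMap_zero]
  by_cases hr : 0 < r
  · simp only [hr, abs_of_pos hr, true_and]
    split_ifs <;> grind
  · simp [hr]

theorem setIntegral_ball_eq_intervalIntegral_circleAverage {g : ℂ → ℝ} {c : ℂ} {R : ℝ}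
    (hR : 0 ≤ R) (hg : ContinuousOn g (closedBall c R)) :
    ∫ w in ball c R, g w = ∫ r in 0..R, 2 * π * r * circleAverage g c r := by
  have hint : IntegrableOn (fun q : ℝ × ℝ => q.1 * g (circleMap c q.1 q.2))
      (Ioo 0 R ×ˢ Ioo (-π) π) := by
    refine (ContinuousOn.integrableOn_compact (isCompact_Icc.prod isCompact_Icc) ?_).mono_set
      (prod_mono Ioo_subset_Icc_self Ioo_subset_Icc_self)
    refine continuousOn_fst.mul (hg.comp (by fun_prop) ?_)
    rintro ⟨r, θ⟩ ⟨⟨hr0, hrR⟩, -⟩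
    simpa [dist_eq_norm, circleMap_sub_center, abs_of_nonneg hr0] using hrR
  rw [Measure.volume_eq_prod] at hint
  rw [setIntegral_ball_eq_setIntegral_polar, Measure.volume_eq_prod, setIntegral_prod _ hint,
    intervalIntegral.integral_of_le hR, integral_Ioc_eq_integral_Ioo]
  refine setIntegral_congr_fun measurableSet_Ioo fun r _ => ?_
  rw [integral_const_mul, setIntegral_Ioo_circleMap_eq_circleAverage]
  ring

theorem DiffContOnCl.pi_mul_sq_mul_norm_le_setIntegral_norm {f : ℂ → ℂ} {c : ℂ} {R : ℝ}
    (hR : 0 < R) (hf : DiffContOnCl ℂ f (ball c R)) :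
    π * R ^ 2 * ‖f c‖ ≤ ∫ w in ball c R, ‖f w‖ := by
  have hcont : ContinuousOn (fun w => ‖f w‖) (closedBall c R) := by
    simpa [closure_ball c hR.ne'] using hf.continuousOn.norm
  have hmean (r : ℝ) (hr : r ∈ Icc 0 R) :
      2 * π * r * ‖f c‖ ≤ 2 * π * r * Real.circleAverage (fun w => ‖f w‖) c r := by
    have hr0 : 0 ≤ r := hr.1
    gcongr
    have hball : ball c |r| ⊆ ball c R := ball_subset_ball (by rw [abs_of_nonneg hr0]; exact hr.2)
    exact (hf.mono hball).norm_le_circleAverage_norm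
  have hint : IntervalIntegrable (fun r => 2 * π * r * Real.circleAverage (fun w => ‖f w‖) c r)
      volume 0 R := by
    refine ((continuousOn_const.mul continuousOn_id).mul
      ((hcont.mono fun z hz => ?_).circleAverage fun r hr => ?_)).intervalIntegrable
    · rw [uIcc_of_le hR.le] at hz
      exact mem_closedBall_iff_norm.2 hz.2
    · exact (uIcc_of_le hR.le ▸ hr).1
  calc π * R ^ 2 * ‖f c‖ = ∫ r in 0..R, 2 * π * r * ‖f c‖ := by
        rw [intervalIntegral.integral_mul_const, intervalIntegral.integral_const_mul, integral_id]
        ring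
    _ ≤ ∫ r in 0..R, 2 * π * r * Real.circleAverage (fun w => ‖f w‖) c r :=
        intervalIntegral.integral_mono_on hR.le
          (Continuous.intervalIntegrable (by fun_prop) _ _) hint hmean
    _ = ∫ w in ball c R, ‖f w‖ :=
        (setIntegral_ball_eq_intervalIntegral_circleAverage hR.le hcont).symm

theorem mul_sq_le_setIntegral_ball_of_doubling {X : Type*} [MetricSpace X] [ProperSpace X]
    [MeasurableSpace X] [OpensMeasurableSpace X] {μ : Measure X} [IsFiniteMeasureOnCompacts μ]
    {φ : X → ℝ} {c : X} {R A : ℝ} (hR : 0 < R) (hA : 0 ≤ A) (hφ0 : 0 ≤ φ)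
    (hφ : ContinuousOn φ (closedBall c R))
    (hloc : ∀ z r, 0 < r → closedBall z r ⊆ ball c R → (∀ w ∈ closedBall z r, φ w ≤ 4 * φ z) →
      φ z * r ^ 2 ≤ A * ∫ w in ball z r, φ w ∂μ) :
    φ c * R ^ 2 ≤ 4 * A * ∫ w in ball c R, φ w ∂μ := by
  obtain ⟨z, hz, hmax⟩ := (isCompact_closedBall c R).exists_isMaxOn
    ⟨c, mem_closedBall_self hR.le⟩
    (hφ.mul ((continuous_const.sub (continuous_id.dist continuous_const)).pow 2).continuousOn)
  have hmax' (w : X) (hw : w ∈ closedBall c R) :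
      φ w * (R - dist w c) ^ 2 ≤ φ z * (R - dist z c) ^ 2 := hmax hw
  set d := R - dist z c
  have hd : 0 ≤ d := sub_nonneg.2 (mem_closedBall.1 hz)
  have hc : φ c * R ^ 2 ≤ φ z * d ^ 2 := by simpa using hmax' c (mem_closedBall_self hR.le)
  have hint : IntegrableOn φ (ball c R) μ :=
    (hφ.integrableOn_compact (isCompact_closedBall c R)).mono_set ball_subset_closedBall
  have hI : 0 ≤ ∫ w in ball c R, φ w ∂μ := setIntegral_nonneg measurableSet_ball fun w _ => hφ0 w
  rcases hd.eq_or_lt with hd0 | hdpos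
  · rw [← hd0] at hc
    nlinarith
  have hsub : closedBall z (d / 2) ⊆ ball c R := fun w hw => by
    have := dist_triangle w z c
    rw [mem_closedBall] at hw
    rw [mem_ball]
    linarith
  have hdoubling (w : X) (hw : w ∈ closedBall z (d / 2)) : φ w ≤ 4 * φ z := by
    have hwd : d / 2 ≤ R - dist w c := by
      have := dist_triangle w z c
      rw [mem_closedBall] at hw
      linarith
    have := hmax' w (ball_subset_closedBall (hsub hw))
    have : φ w * (d / 2) ^ 2 ≤ φ w * (R - dist w c) ^ 2 := by
      gcongr
      exact hφ0 w
    have : φ w * d ^ 2 ≤ 4 * φ z * d ^ 2 := by nlinarith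
    exact le_of_mul_le_mul_right this (by positivity)
  calc φ c * R ^ 2 ≤ 4 * (φ z * (d / 2) ^ 2) := by linarith
    _ ≤ 4 * (A * ∫ w in ball z (d / 2), φ w ∂μ) := by
        have := hloc z (d / 2) (by positivity) hsub hdoubling
        linarith
    _ ≤ 4 * A * ∫ w in ball c R, φ w ∂μ := by
        rw [mul_assoc]
        refine mul_le_mul_of_nonneg_left (mul_le_mul_of_nonneg_left ?_ hA) (by norm_num)
        exact setIntegral_mono_set hint (Eventually.of_forall fun w => hφ0 w)
          (ball_subset_closedBall.trans hsub).eventuallyLE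

theorem le_rpow_one_sub_mul_rpow {x M q : ℝ} (hx : 0 ≤ x) (hxM : x ≤ M) (hq : q ≤ 1) :
    x ≤ M ^ (1 - q) * x ^ q := by
  rcases hx.eq_or_lt with rfl | hx
  · positivity
  calc x = x ^ (1 - q) * x ^ q := by rw [← rpow_add hx, sub_add_cancel, rpow_one]
    _ ≤ M ^ (1 - q) * x ^ q := by gcongr

theorem DiffContOnCl.pi_mul_sq_mul_norm_rpow_le_of_norm_le {f : ℂ → ℂ} {z : ℂ} {r q L : ℝ}
    (hr : 0 < r) (hq : 0 < q) (hq1 : q ≤ 1) (hL : 0 ≤ L) (hf : DiffContOnCl ℂ f (ball z r))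
    (hbd : ∀ w ∈ closedBall z r, ‖f w‖ ≤ L * ‖f z‖) :
    π * r ^ 2 * ‖f z‖ ^ q ≤ L ^ (1 - q) * ∫ w in ball z r, ‖f w‖ ^ q := by
  have hcont : ContinuousOn f (closedBall z r) := by
    simpa [closure_ball z hr.ne'] using hf.continuousOn
  have hint : IntegrableOn (fun w => ‖f w‖ ^ q) (ball z r) :=
    ((hcont.norm.rpow_const fun _ _ => Or.inr hq.le).integrableOn_compact
      (isCompact_closedBall z r)).mono_set ball_subset_closedBall
  rcases (norm_nonneg (f z)).eq_or_lt with hB | hB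
  · rw [← hB, zero_rpow hq.ne', mul_zero]
    exact mul_nonneg (rpow_nonneg hL _)
      (setIntegral_nonneg measurableSet_ball fun w _ => rpow_nonneg (norm_nonneg _) _)
  have hmean : π * r ^ 2 * ‖f z‖ ≤ (L * ‖f z‖) ^ (1 - q) * ∫ w in ball z r, ‖f w‖ ^ q := by
    rw [← integral_const_mul]
    refine (hf.pi_mul_sq_mul_norm_le_setIntegral_norm hr).trans
      (setIntegral_mono_on ?_ (hint.const_mul _) measurableSet_ball fun w hw =>
        le_rpow_one_sub_mul_rpow (norm_nonneg _) (hbd w (ball_subset_closedBall hw)) hq1)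
    exact (hcont.norm.integrableOn_compact (isCompact_closedBall z r)).mono_set
      ball_subset_closedBall
  refine le_of_mul_le_mul_right ?_ (rpow_pos_of_pos hB (1 - q))
  calc π * r ^ 2 * ‖f z‖ ^ q * ‖f z‖ ^ (1 - q) = π * r ^ 2 * ‖f z‖ := by
        rw [mul_assoc _ (‖f z‖ ^ q), ← rpow_add hB, add_sub_cancel, rpow_one]
    _ ≤ (L * ‖f z‖) ^ (1 - q) * ∫ w in ball z r, ‖f w‖ ^ q := hmean
    _ = L ^ (1 - q) * (∫ w in ball z r, ‖f w‖ ^ q) * ‖f z‖ ^ (1 - q) := by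
        rw [mul_rpow hL hB.le]
        ring

theorem DiffContOnCl.norm_rpow_le_setIntegral_of_le_one {f : ℂ → ℂ} {c : ℂ} {R q : ℝ}
    (hR : 0 < R) (hq : 0 < q) (hq1 : q ≤ 1) (hf : DiffContOnCl ℂ f (ball c R)) :
    ‖f c‖ ^ q ≤ 4 ^ (1 / q) / (π * R ^ 2) * ∫ w in ball c R, ‖f w‖ ^ q := by
  have hcont : ContinuousOn f (closedBall c R) := by
    simpa [closure_ball c hR.ne'] using hf.continuousOn
  have hinv (x : ℝ) (hx : 0 ≤ x) : (x ^ q) ^ (1 / q) = x := by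
    rw [← rpow_mul hx, mul_one_div_cancel hq.ne', rpow_one]
  have h4 : (4 : ℝ) ^ (1 / q) = 4 * 4 ^ ((1 - q) / q) := by
    rw [show 1 / q = 1 + (1 - q) / q by field_simp; ring, rpow_add (by norm_num), rpow_one]
  have key := mul_sq_le_setIntegral_ball_of_doubling (μ := volume) hR
    (A := 4 ^ ((1 - q) / q) / π) (by positivity) (fun w => rpow_nonneg (norm_nonneg (f w)) q)
    (hcont.norm.rpow_const fun _ _ => Or.inr hq.le) fun z r hr hsub hdoubling => by
      have hbd (w : ℂ) (hw : w ∈ closedBall z r) : ‖f w‖ ≤ 4 ^ (1 / q) * ‖f z‖ := by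
        calc ‖f w‖ = (‖f w‖ ^ q) ^ (1 / q) := (hinv _ (norm_nonneg _)).symm
          _ ≤ (4 * ‖f z‖ ^ q) ^ (1 / q) := by gcongr; exact hdoubling w hw
          _ = 4 ^ (1 / q) * ‖f z‖ := by
            rw [mul_rpow (by norm_num) (by positivity), hinv _ (norm_nonneg _)]
      have hfzr : DiffContOnCl ℂ f (ball z r) := hf.mono (ball_subset_closedBall.trans hsub)
      have hloc := hfzr.pi_mul_sq_mul_norm_rpow_le_of_norm_le hr hq hq1 (by positivity) hbd
      rw [← rpow_mul (by norm_num), one_div_mul_eq_div] at hloc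
      rw [div_mul_eq_mul_div, le_div_iff₀ pi_pos]
      linarith
  rw [div_mul_eq_mul_div, le_div_iff₀ (by positivity), h4]
  calc ‖f c‖ ^ q * (π * R ^ 2) = π * (‖f c‖ ^ q * R ^ 2) := by ring
    _ ≤ π * (4 * (4 ^ ((1 - q) / q) / π) * ∫ w in ball c R, ‖f w‖ ^ q) := by gcongr
    _ = 4 * 4 ^ ((1 - q) / q) * ∫ w in ball c R, ‖f w‖ ^ q := by field_simp

theorem DiffContOnCl.norm_rpow_le_setIntegral {f : ℂ → ℂ} {c : ℂ} {R p : ℝ} (hR : 0 < R)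
    (hp : 0 < p) (hf : DiffContOnCl ℂ f (ball c R)) :
    ‖f c‖ ^ p ≤ 4 ^ (⌈p⌉₊ / p) / (π * R ^ 2) * ∫ w in ball c R, ‖f w‖ ^ p := by
  set k := ⌈p⌉₊
  have hk : 0 < (k : ℝ) := Nat.cast_pos.2 (Nat.ceil_pos.2 hp)
  have hpow (x : ℝ) (hx : 0 ≤ x) : (x ^ k) ^ (p / k) = x ^ p := by
    rw [← rpow_natCast, ← rpow_mul hx, mul_div_cancel₀ _ hk.ne']
  have hfk : DiffContOnCl ℂ (fun w => f w ^ k) (ball c R) :=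
    ⟨hf.differentiableOn.pow k, hf.continuousOn.pow k⟩
  have := hfk.norm_rpow_le_setIntegral_of_le_one hR (q := p / k) (by positivity)
    ((div_le_one hk).2 (Nat.le_ceil p))
  simpa only [norm_pow, hpow _ (norm_nonneg _), one_div_div] using this

def heightAboveGraph (a : ℝ → ℝ) (w : ℂ) : ℝ := w.im - a w.re

@[simp]
theorem heightAboveGraph_zetaC_add_mul_I (a : ℝ → ℝ) (u t : ℝ) :
    heightAboveGraph a (zetaC a u + t * I) = t := by
  simp [heightAboveGraph, zetaC]

theorem measurePreserving_zetaC_add_mul_I {a : ℝ → ℝ} (ha : Measurable a) :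
    MeasurePreserving (fun q : ℝ × ℝ => zetaC a q.1 + q.2 * I) (volume.prod volume) volume := by
  have hshear : MeasurePreserving (fun q : ℝ × ℝ => (q.1, q.2 + a q.1))
      (volume.prod volume) (volume.prod volume) :=
    (MeasurePreserving.id volume).skew_product (by fun_prop)
      (ae_of_all _ fun u => map_add_right_eq_self volume (a u))
  have hΨ : (fun q : ℝ × ℝ => zetaC a q.1 + q.2 * I) =
      Complex.measurableEquivRealProd.symm ∘ fun q => (q.1, q.2 + a q.1) := by
    funext q
    apply Complex.ext <;> simp [zetaC, add_comm]
  rw [hΨ]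
  exact Complex.volume_preserving_equiv_real_prod.symm.comp hshear

theorem lintegral_eq_lintegral_lintegral_zetaC_add_mul_I {a : ℝ → ℝ} (ha : Measurable a)
    {g : ℂ → ℝ≥0∞} (hg : AEMeasurable g) :
    ∫⁻ w, g w = ∫⁻ t : ℝ, ∫⁻ u : ℝ, g (zetaC a u + t * I) := by
  have hΨ := measurePreserving_zetaC_add_mul_I ha
  rw [← hΨ.map_eq, lintegral_map' (hΨ.map_eq ▸ hg) hΨ.measurable.aemeasurable,
    lintegral_prod_symm (fun q : ℝ × ℝ => g (zetaC a q.1 + q.2 * I))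
      (hg.comp_quasiMeasurePreserving hΨ.quasiMeasurePreserving)]

theorem measurable_heightAboveGraph {a : ℝ → ℝ} (ha : Measurable a) :
    Measurable (heightAboveGraph a) :=
  Complex.measurable_im.sub (ha.comp Complex.measurable_re)

theorem setLIntegral_preimage_heightAboveGraph {a : ℝ → ℝ} (ha : Measurable a) {s : Set ℝ}
    (hs : MeasurableSet s) {g : ℂ → ℝ≥0∞}
    (hg : AEMeasurable g (volume.restrict (heightAboveGraph a ⁻¹' s))) :
    ∫⁻ w in heightAboveGraph a ⁻¹' s, g w = ∫⁻ t in s, ∫⁻ u, g (zetaC a u + t * I) := by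
  have hmeas : MeasurableSet (heightAboveGraph a ⁻¹' s) := measurable_heightAboveGraph ha hs
  rw [← lintegral_indicator hmeas, lintegral_eq_lintegral_lintegral_zetaC_add_mul_I ha
    ((aemeasurable_indicator_iff hmeas).2 hg), ← lintegral_indicator hs]
  congr 1
  funext t
  by_cases ht : t ∈ s <;> simp [indicator, ht]

theorem one_le_arcDen (a : ℝ → ℝ) (u : ℝ) : 1 ≤ arcDen a u :=
  Real.one_le_sqrt.2 (le_add_of_nonneg_right (sq_nonneg _))

theorem setLIntegral_rpow_le_of_bdryInt_le {a : ℝ → ℝ} (ha : Measurable a) {p : ℝ} {F : ℂ → ℂ}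
    {τ₁ τ₂ : ℝ} {B : ℝ≥0∞} (hF : ContinuousOn F (heightAboveGraph a ⁻¹' Icc τ₁ τ₂))
    (hbound : ∀ τ ∈ Icc τ₁ τ₂, bdryInt a p F τ ≤ B) :
    ∫⁻ w in heightAboveGraph a ⁻¹' Icc τ₁ τ₂, ENNReal.ofReal (‖F w‖ ^ p) ≤
      B * ENNReal.ofReal (τ₂ - τ₁) := by
  rw [setLIntegral_preimage_heightAboveGraph ha measurableSet_Icc
    ((hF.aemeasurable (measurable_heightAboveGraph ha measurableSet_Icc)).norm.pow_const
      p).ennreal_ofReal]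
  calc _ ≤ ∫⁻ _ in Icc τ₁ τ₂, B := setLIntegral_mono' measurableSet_Icc fun τ hτ =>
        (lintegral_mono fun u => ENNReal.ofReal_le_ofReal (le_mul_of_one_le_right
          (rpow_nonneg (norm_nonneg _) p) (one_le_arcDen a u))).trans (hbound τ hτ)
    _ = B * ENNReal.ofReal (τ₂ - τ₁) := by rw [setLIntegral_const, Real.volume_Icc]

theorem tendsto_setLIntegral_setOf_le_atTop {α : Type*} [MeasurableSpace α] {μ : Measure α}
    {g : α → ℝ≥0∞} (hg : AEMeasurable g μ) (hfin : ∫⁻ x, g x ∂μ ≠ ∞) {φ : α → ℝ}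
    (hφ : Measurable φ) :
    Tendsto (fun R => ∫⁻ x in {x | R ≤ φ x}, g x ∂μ) atTop (𝓝 0) := by
  have hmeas (R : ℝ) : MeasurableSet {x | R ≤ φ x} := measurableSet_le measurable_const hφ
  simp_rw [← lintegral_indicator (hmeas _)]
  simpa using tendsto_lintegral_filter_of_dominated_convergence' (f := 0) g
    (Eventually.of_forall fun R => hg.indicator (hmeas R))
    (Eventually.of_forall fun R => ae_of_all _ (indicator_le_self _ _)) hfin
    (ae_of_all _ fun x => tendsto_const_nhds.congr' <| (eventually_gt_atTop (φ x)).mono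
      fun R hR => (indicator_of_notMem (s := {x | R ≤ φ x}) (not_le.2 hR) g).symm)

theorem closedBall_subset_preimage_heightAboveGraph {a : ℝ → ℝ} {K : ℝ≥0}
    (ha : LipschitzWith K a) (u τ δ : ℝ) :
    closedBall (zetaC a u + τ * I) (δ / (1 + K)) ⊆
      heightAboveGraph a ⁻¹' Icc (τ - δ) (τ + δ) := by
  intro w hw
  have hre : |w.re - u| ≤ δ / (1 + K) := by
    simpa [zetaC] using (Complex.abs_re_le_norm _).trans (mem_closedBall_iff_norm.1 hw)
  have him : |w.im - (a u + τ)| ≤ δ / (1 + K) := by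
    simpa [zetaC] using (Complex.abs_im_le_norm _).trans (mem_closedBall_iff_norm.1 hw)
  have hlip : |a w.re - a u| ≤ K * |w.re - u| := by
    simpa [Real.dist_eq] using ha.dist_le_mul w.re u
  have hsum : δ / (1 + K) + K * (δ / (1 + K)) = δ := by field_simp
  have : |heightAboveGraph a w - τ| ≤ δ := by
    rw [heightAboveGraph, show w.im - a w.re - τ = (w.im - (a u + τ)) - (a w.re - a u) by ring]
    refine (abs_sub _ _).trans ?_
    nlinarith [K.coe_nonneg]
  exact ⟨by linarith [neg_abs_le (heightAboveGraph a w - τ)],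
    by linarith [le_abs_self (heightAboveGraph a w - τ)]⟩

theorem DifferentiableOn.ofReal_norm_rpow_le_setLIntegral {F : ℂ → ℂ} {z : ℂ} {ρ p : ℝ}
    (hρ : 0 < ρ) (hp : 0 < p) (hF : DifferentiableOn ℂ F (closedBall z ρ)) :
    ENNReal.ofReal (‖F z‖ ^ p) ≤ ENNReal.ofReal (4 ^ (⌈p⌉₊ / p) / (π * ρ ^ 2)) *
      ∫⁻ w in ball z ρ, ENNReal.ofReal (‖F w‖ ^ p) := by
  have hint : IntegrableOn (fun w => ‖F w‖ ^ p) (ball z ρ) :=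
    ((hF.continuousOn.norm.rpow_const fun _ _ => Or.inr hp.le).integrableOn_compact
      (isCompact_closedBall z ρ)).mono_set ball_subset_closedBall
  have hmean := DiffContOnCl.norm_rpow_le_setIntegral hρ hp
    (hF.diffContOnCl_ball subset_rfl)
  rw [← ofReal_integral_eq_lintegral_ofReal hint
    (Eventually.of_forall fun w => rpow_nonneg (norm_nonneg _) p), ← ENNReal.ofReal_mul
    (by positivity)]
  exact ENNReal.ofReal_le_ofReal hmean

theorem DifferentiableOn.exists_norm_lt_of_setLIntegral_rpow_ne_top {F : ℂ → ℂ} {T : Set ℂ}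
    (hF : DifferentiableOn ℂ F T) (hT : MeasurableSet T) {p : ℝ} (hp : 0 < p)
    (hfin : ∫⁻ w in T, ENNReal.ofReal (‖F w‖ ^ p) ≠ ∞) {ρ : ℝ} (hρ : 0 < ρ) {ε : ℝ}
    (hε : 0 < ε) :
    ∃ R, 0 < R ∧ ∀ z, closedBall z ρ ⊆ T → R ≤ |z.re| → ‖F z‖ < ε := by
  set C := 4 ^ (⌈p⌉₊ / p) / (π * ρ ^ 2)
  have hC : 0 < C := by positivity
  have htail := tendsto_setLIntegral_setOf_le_atTop
    ((hF.continuousOn.aemeasurable hT).norm.pow_const p).ennreal_ofReal hfin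
    (Complex.measurable_re.abs)
  obtain ⟨R₀, hR₀⟩ := eventually_atTop.1 <| htail.eventually <|
    gt_mem_nhds (ENNReal.ofReal_pos.2 (div_pos (rpow_pos_of_pos hε p) hC))
  refine ⟨max R₀ 0 + ρ, by positivity, fun z hzT hz => ?_⟩
  have hball : ball z ρ ⊆ {w | max R₀ 0 ≤ |w.re|} ∩ T := fun w hw => by
    refine ⟨?_, hzT (ball_subset_closedBall hw)⟩
    have := (Complex.abs_re_le_norm (w - z)).trans (mem_ball_iff_norm.1 hw).le
    rw [Complex.sub_re] at this
    show max R₀ 0 ≤ |w.re|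
    linarith [abs_sub_abs_le_abs_sub z.re w.re, abs_sub_comm z.re w.re]
  have hlt : ENNReal.ofReal (‖F z‖ ^ p) < ENNReal.ofReal (ε ^ p) :=
    calc ENNReal.ofReal (‖F z‖ ^ p)
        ≤ ENNReal.ofReal C * ∫⁻ w in ball z ρ, ENNReal.ofReal (‖F w‖ ^ p) :=
          (hF.mono hzT).ofReal_norm_rpow_le_setLIntegral hρ hp
      _ ≤ ENNReal.ofReal C * ∫⁻ w in {w | max R₀ 0 ≤ |w.re|},
            ENNReal.ofReal (‖F w‖ ^ p) ∂volume.restrict T := by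
          rw [Measure.restrict_restrict (measurableSet_le measurable_const
            Complex.measurable_re.abs)]
          gcongr
      _ < ENNReal.ofReal C * ENNReal.ofReal (ε ^ p / C) :=
          ENNReal.mul_lt_mul_right (ENNReal.ofReal_pos.2 hC).ne' ENNReal.ofReal_ne_top
            (hR₀ _ (le_max_left _ _))
      _ = ENNReal.ofReal (ε ^ p) := by
          rw [← ENNReal.ofReal_mul hC.le, mul_div_cancel₀ _ hC.ne']
  have := (ENNReal.ofReal_lt_ofReal_iff (rpow_pos_of_pos hε p)).1 hlt
  exact (rpow_lt_rpow_iff (norm_nonneg _) hε.le hp).1 this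

theorem hardy_lipschitz_uniform_decay_general
    (M : ℝ) (hM : 0 < M) (a : ℝ → ℝ)
    (ha : ∀ u₁ u₂ : ℝ, |a u₁ - a u₂| ≤ M * |u₁ - u₂|)
    (p : ℝ) (hp : 0 < p)
    (F : ℂ → ℂ) (hFd : DifferentiableOn ℂ F (OmegaP a))
    (τ₁ τ₂ M₁ : ℝ) (hτ₁ : 0 < τ₁)
    (hbound : ∀ τ ∈ Set.Icc τ₁ τ₂, bdryInt a p F τ ≤ ENNReal.ofReal M₁)
    (δ : ℝ) (hδ : 0 < δ) :
    ∀ ε : ℝ, 0 < ε → ∃ R : ℝ, 0 < R ∧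
      ∀ u τ : ℝ, R ≤ |u| → τ₁ + δ ≤ τ → τ ≤ τ₂ - δ →
        ‖F (zetaC a u + (τ : ℂ) * Complex.I)‖ < ε := by
  intro ε hε
  have hlip : LipschitzWith ⟨M, hM.le⟩ a := LipschitzWith.of_dist_le_mul fun u₁ u₂ => ha u₁ u₂
  have ha_meas : Measurable a := hlip.continuous.measurable
  set S := heightAboveGraph a ⁻¹' Icc τ₁ τ₂
  have hFS : DifferentiableOn ℂ F S := hFd.mono fun w hw => by
    have : τ₁ ≤ w.im - a w.re := hw.1
    show a w.re < w.im
    linarith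
  have hfin : ∫⁻ w in S, ENNReal.ofReal (‖F w‖ ^ p) ≠ ∞ :=
    ne_top_of_le_ne_top (ENNReal.mul_ne_top ENNReal.ofReal_ne_top ENNReal.ofReal_ne_top)
      (setLIntegral_rpow_le_of_bdryInt_le ha_meas hFS.continuousOn hbound)
  obtain ⟨R, hR, hdecay⟩ := hFS.exists_norm_lt_of_setLIntegral_rpow_ne_top
    (measurable_heightAboveGraph ha_meas measurableSet_Icc) hp hfin
    (ρ := δ / (1 + M)) (by positivity) hε
  refine ⟨R, hR, fun u τ hu hτ₁δ hτ₂δ => hdecay _ ?_ (by simpa [zetaC] using hu)⟩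
  exact (closedBall_subset_preimage_heightAboveGraph hlip u τ δ).trans
    (preimage_mono (Icc_subset_Icc (by linarith) (by linarith)))

/-- If the `L^p(Γ_τ)` integrals of an analytic `F` are uniformly
bounded for `τ ∈ [τ₁, τ₂]`, then `F(ζ(u) + iτ) → 0` uniformly for
`τ ∈ [τ₁ + δ, τ₂ − δ]` as `|u| → ∞`. -/
theorem hardy_lipschitz_uniform_decay
    (M : ℝ) (hM : 0 < M) (a : ℝ → ℝ)
    (ha : ∀ u₁ u₂ : ℝ, |a u₁ - a u₂| ≤ M * |u₁ - u₂|)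
    (p : ℝ) (hp : 0 < p)
    (F : ℂ → ℂ) (hFd : DifferentiableOn ℂ F (OmegaP a))
    (τ₁ τ₂ M₁ : ℝ) (hτ₁ : 0 < τ₁) (hτ₁₂ : τ₁ < τ₂) (hM₁ : 0 < M₁)
    (hbound : ∀ τ ∈ Set.Icc τ₁ τ₂, bdryInt a p F τ ≤ ENNReal.ofReal M₁)
    (δ : ℝ) (hδ : 0 < δ) (hδ' : δ < (τ₂ - τ₁) / 2) :
    ∀ ε : ℝ, 0 < ε → ∃ R : ℝ, 0 < R ∧
      ∀ u τ : ℝ, R ≤ |u| → τ₁ + δ ≤ τ → τ ≤ τ₂ - δ →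
        ‖F (zetaC a u + (τ : ℂ) * Complex.I)‖ < ε :=
  hardy_lipschitz_uniform_decay_general M hM a ha p hp F hFd τ₁ τ₂ M₁ hτ₁ hbound δ hδ
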